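/- arXiv:1904.03168 — 2 statements merged into one kernel-verified Lean document; each statement's English description precedes it below -/
import Mathlib

section
/- For every a ≥ 0: (i) almost surely, on the event {T_a^{(H)} < ∞} one has S_{ℓ_{T_a^{(H)}}} = T_a^{(H)} (i.e. the graph of T_a^{(H)} is contained in the regeneration set R = {t ≥ 0 : S_{ℓ_t} = t}); and (ii) almost surely T_a^{(H)} = inf{t > 0 : X_{ℓ_t} − H_{S_{ℓ_t}} > a}, as elements of [0,∞]. -/
open MeasureTheory ProbabilityTheory Filter Set
open scoped ENNReal NNReal Topology

noncomputable section

/-- A Lévy process with values in `E`: starts at `0` a.s., a.s. càdlàg sample paths on `[0,∞)`,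
independent and stationary increments. -/
structure IsLevyProcess {Ω E : Type*} [MeasurableSpace Ω] [MeasurableSpace E]
    [TopologicalSpace E] [AddCommGroup E] (P : MeasureTheory.Measure Ω) (X : ℝ → Ω → E) :
    Prop where
  measurable : ∀ t : ℝ, Measurable (X t)
  init : ∀ᵐ ω ∂P, X 0 ω = (0 : E)
  right_cont : ∀ᵐ ω ∂P, ∀ t : ℝ, 0 ≤ t → ContinuousWithinAt (fun s => X s ω) (Set.Ici t) t
  left_lim : ∀ᵐ ω ∂P, ∀ t : ℝ, 0 < t →
    ∃ l : E, Filter.Tendsto (fun s => X s ω) (nhdsWithin t (Set.Iio t)) (nhds l)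
  indep_increments : ∀ (n : ℕ) (t : Fin (n + 1) → ℝ), 0 ≤ t 0 → Monotone t →
    iIndepFun
      (fun i : Fin n => fun ω => X (t i.succ) ω - X (t i.castSucc) ω) P
  stat_increments : ∀ s t : ℝ, 0 ≤ s → 0 ≤ t →
    P.map (fun ω => X (t + s) ω - X t ω) = P.map (X s)

/-- A subordinator: a real Lévy process with a.s. non-decreasing sample paths on `[0,∞)`. -/
def IsSubordinator {Ω : Type*} [MeasurableSpace Ω] (P : MeasureTheory.Measure Ω)
    (S : ℝ → Ω → ℝ) : Prop :=
  IsLevyProcess P S ∧ ∀ᵐ ω ∂P, MonotoneOn (fun t => S t ω) (Set.Ici 0)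

/-- A subordinator with a.s. strictly increasing sample paths on `[0,∞)`. -/
def IsStrictSubordinator {Ω : Type*} [MeasurableSpace Ω] (P : MeasureTheory.Measure Ω)
    (S : ℝ → Ω → ℝ) : Prop :=
  IsLevyProcess P S ∧ ∀ᵐ ω ∂P, StrictMonoOn (fun t => S t ω) (Set.Ici 0)

/-- The three processes `X`, `S`, `H` are mutually independent (as processes). -/
def IndepProc3 {Ω : Type*} [MeasurableSpace Ω] (P : MeasureTheory.Measure Ω)
    (X S H : ℝ → Ω → ℝ) : Prop :=
  iIndepFun
    (![fun ω t => X t ω, fun ω t => S t ω, fun ω t => H t ω] : Fin 3 → Ω → (ℝ → ℝ)) P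

/-- Two processes are independent. -/
def IndepProc2 {Ω : Type*} [MeasurableSpace Ω] (P : MeasureTheory.Measure Ω)
    (X S : ℝ → Ω → ℝ) : Prop :=
  IndepFun (fun ω t => X t ω) (fun ω t => S t ω) P

/-- `ℓ_t = inf { s > 0 : S_s > t }`, the right-continuous inverse of `S`. -/
def invS {Ω : Type*} (S : ℝ → Ω → ℝ) (t : ℝ) (ω : Ω) : ℝ :=
  sInf {s : ℝ | 0 < s ∧ t < S s ω}

/-- The time-changed process `𝕏_t = X_{ℓ_t}`. -/
def subX {Ω : Type*} (X S : ℝ → Ω → ℝ) (t : ℝ) (ω : Ω) : ℝ :=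
  X (invS S t ω) ω

/-- `inf { t > 0 : property t holds }`, valued in `[0,∞]` with `inf ∅ = ∞`. -/
def passageTime {Ω : Type*} (Y : Ω → ℝ → Prop) (ω : Ω) : ℝ≥0∞ :=
  sInf (ENNReal.ofReal '' {t : ℝ | 0 < t ∧ Y ω t})

/-- `T_a^{(H)} = inf { t > 0 : 𝕏_t > a + H_t }`. -/
def TH {Ω : Type*} (X S H : ℝ → Ω → ℝ) (a : ℝ) (ω : Ω) : ℝ≥0∞ :=
  passageTime (fun ω t => a + H t ω < subX X S t ω) ω

end

/-!
Pathwise, `ℓ` is constant, equal to `u`, on each excursion interval `[S_{u-}, S_u)` of `S`, and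
`S_{ℓ_t} = t` off these intervals. Such a `u` is `ℓ_q` for a rational `q`, a random time independent
of `X`; since a Lévy process has no fixed discontinuities, almost surely `X` is left-continuous at
every such `u`. Hence if `a + H_t < X_{ℓ_t}` at a time `t` inside an excursion interval, the same
crossing already happens at `S_v` for some `v < u` close to `u`, because `H_{S_v} ≤ H_t`. So the
first passage never falls inside an excursion interval, which is (i), and every crossing is
preceded by one at a time in the range of `S`, where both passage conditions agree; together with
`H_t ≤ H_{S_{ℓ_t}}` this gives (ii).
-/

noncomputable section

namespace LevyRegeneration

def dyadicCeil (m : ℕ) (t : ℝ) : ℝ := ⌈t * 2 ^ m⌉ / 2 ^ m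

lemma le_dyadicCeil (m : ℕ) (t : ℝ) : t ≤ dyadicCeil m t := by
  rw [dyadicCeil, le_div_iff₀ (by positivity)]
  exact Int.le_ceil _

lemma dyadicCeil_lt (m : ℕ) (t : ℝ) : dyadicCeil m t < t + (2 ^ m)⁻¹ := by
  rw [dyadicCeil, div_lt_iff₀ (by positivity), add_mul, inv_mul_cancel₀ (by positivity)]
  exact Int.ceil_lt_add_one _

lemma tendsto_inv_two_pow : Tendsto (fun m : ℕ => ((2 : ℝ) ^ m)⁻¹) atTop (𝓝 0) :=
  tendsto_inv_atTop_zero.comp (tendsto_pow_atTop_atTop_of_one_lt one_lt_two)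

lemma tendsto_dyadicCeil (t : ℝ) : Tendsto (fun m => dyadicCeil m t) atTop (𝓝[≥] t) := by
  refine tendsto_nhdsWithin_iff.2 ⟨?_, .of_forall (le_dyadicCeil · t)⟩
  refine tendsto_of_tendsto_of_tendsto_of_le_of_le tendsto_const_nhds ?_ (le_dyadicCeil · t)
    (fun m => (dyadicCeil_lt m t).le)
  simpa using tendsto_inv_two_pow.const_add t

lemma tendsto_dyadicCeil_sub (t : ℝ) :
    Tendsto (fun m => dyadicCeil m t - (2 ^ m)⁻¹) atTop (𝓝[<] t) := by
  refine tendsto_nhdsWithin_iff.2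
    ⟨?_, .of_forall fun m => show _ < t by linarith [dyadicCeil_lt m t]⟩
  simpa using ((tendsto_dyadicCeil t).mono_right nhdsWithin_le_nhds).sub tendsto_inv_two_pow

/-- Evaluation `(t, f) ↦ f t` on `ℝ × (ℝ → ℝ)` is not measurable, but evaluation at a point that
depends on `t` only through `⌈t * 2 ^ m⌉` is. -/
lemma measurable_apply_ceil_mul_two_pow (m : ℕ) (g : ℤ → ℝ) :
    Measurable fun p : ℝ × (ℝ → ℝ) => p.2 (g ⌈p.1 * 2 ^ m⌉) := by
  have hF : Measurable fun q : (ℝ → ℝ) × ℤ => q.1 (g q.2) :=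
    measurable_from_prod_countable_left fun k => measurable_pi_apply (g k)
  exact hF.comp (measurable_snd.prodMk (Int.measurable_ceil.comp (measurable_fst.mul_const _)))

def dyadicIncrement (f : ℝ → ℝ) (t : ℝ) (m : ℕ) : ℝ :=
  f (dyadicCeil m t) - f (dyadicCeil m t - (2 ^ m)⁻¹)

lemma measurableSet_tendsto_dyadicIncrement :
    MeasurableSet {p : ℝ × (ℝ → ℝ) | Tendsto (dyadicIncrement p.2 p.1) atTop (𝓝 0)} :=
  measurableSet_tendsto _ fun m => (measurable_apply_ceil_mul_two_pow m fun k => k / 2 ^ m).sub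
    (measurable_apply_ceil_mul_two_pow m fun k => k / 2 ^ m - (2 ^ m)⁻¹)

lemma tendsto_dyadicIncrement {f : ℝ → ℝ} {t : ℝ} (hr : ContinuousWithinAt f (Ici t) t)
    (hl : Tendsto f (𝓝[<] t) (𝓝 (f t))) : Tendsto (dyadicIncrement f t) atTop (𝓝 0) := by
  have h := (hr.tendsto.comp (tendsto_dyadicCeil t)).sub (hl.comp (tendsto_dyadicCeil_sub t))
  rwa [sub_self] at h

lemma tendsto_nhdsLT_of_tendsto_dyadicIncrement {f : ℝ → ℝ} {t l : ℝ}
    (hr : ContinuousWithinAt f (Ici t) t) (hl : Tendsto f (𝓝[<] t) (𝓝 l))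
    (h : Tendsto (dyadicIncrement f t) atTop (𝓝 0)) : Tendsto f (𝓝[<] t) (𝓝 (f t)) := by
  have hlim : Tendsto (dyadicIncrement f t) atTop (𝓝 (f t - l)) :=
    (hr.tendsto.comp (tendsto_dyadicCeil t)).sub (hl.comp (tendsto_dyadicCeil_sub t))
  rwa [← sub_eq_zero.1 (tendsto_nhds_unique h hlim).symm] at hl

lemma tendstoInMeasure_zero_of_map_eq {Ω ι : Type*} [MeasurableSpace Ω] {P : Measure Ω}
    {l : Filter ι} {f g : ι → Ω → ℝ} (hf : ∀ i, Measurable (f i)) (hg : ∀ i, Measurable (g i))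
    (hfg : ∀ i, P.map (f i) = P.map (g i)) (h : TendstoInMeasure P f l 0) :
    TendstoInMeasure P g l 0 := by
  intro ε hε
  refine (h ε hε).congr fun i => ?_
  have hA : MeasurableSet {y : ℝ | ε ≤ edist y 0} :=
    measurableSet_le measurable_const (measurable_id.edist measurable_const)
  have h := congrArg (fun ν : Measure ℝ => ν {y | ε ≤ edist y 0}) (hfg i)
  rwa [Measure.map_apply (hf i) hA, Measure.map_apply (hg i) hA] at h

lemma measure_preimage_eq_zero_of_indepFun {Ω α β : Type*} [MeasurableSpace Ω]
    [MeasurableSpace α] [MeasurableSpace β] {P : Measure Ω} [IsFiniteMeasure P] {U : Ω → α}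
    {W : Ω → β} (hU : Measurable U) (hW : Measurable W) (hUW : IndepFun U W P)
    {B : Set (α × β)} (hB : MeasurableSet B) (hsection : ∀ a, P (W ⁻¹' (Prod.mk a ⁻¹' B)) = 0) :
    P ((fun ω => (U ω, W ω)) ⁻¹' B) = 0 := by
  rw [← Measure.map_apply (hU.prodMk hW) hB,
    (indepFun_iff_map_prod_eq_prod_map_map hU.aemeasurable hW.aemeasurable).1 hUW,
    Measure.prod_apply hB]
  simp [Measure.map_apply hW (measurable_prodMk_left hB), hsection]

section LevyProcess

variable {Ω : Type*} [MeasurableSpace Ω] {P : Measure Ω} [IsFiniteMeasure P] {X : ℝ → Ω → ℝ}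

theorem _root_.IsLevyProcess.ae_tendsto_nhdsLT (hX : IsLevyProcess P X) {t : ℝ} (ht : 0 < t) :
    ∀ᵐ ω ∂P, Tendsto (fun s => X s ω) (𝓝[<] t) (𝓝 (X t ω)) := by
  obtain ⟨r, -, hr_mem, hr⟩ := exists_seq_strictAnti_tendsto' ht
  have hr_pos : ∀ n, 0 < r n := fun n => (hr_mem n).1
  have hsmall : TendstoInMeasure P (fun n => X (r n)) atTop 0 := by
    refine tendstoInMeasure_of_tendsto_ae (fun n => (hX.measurable _).aestronglyMeasurable) ?_
    filter_upwards [hX.init, hX.right_cont] with ω h0 hrc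
    have h := (hrc 0 le_rfl).tendsto.comp
      (tendsto_nhdsWithin_iff.2 ⟨hr, .of_forall fun n => (hr_pos n).le⟩)
    rwa [h0] at h
  -- `X_t - X_{t - r_n}` has the law of `X_{r_n}`, so it tends to `0` in probability too; along an
  -- a.s. convergent subsequence this identifies the left limit at `t` with `X_t`.
  have hincr : TendstoInMeasure P (fun n ω => X t ω - X (t - r n) ω) atTop 0 := by
    refine tendstoInMeasure_zero_of_map_eq (fun n => hX.measurable _)
      (fun n => (hX.measurable _).sub (hX.measurable _)) (fun n => ?_) hsmall
    have h := hX.stat_increments (r n) (t - r n) (hr_pos n).le (sub_nonneg.2 (hr_mem n).2.le)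
    rw [sub_add_cancel] at h
    exact h.symm
  have hleft : Tendsto (fun n => t - r n) atTop (𝓝[<] t) :=
    tendsto_nhdsWithin_iff.2 ⟨by simpa using hr.const_sub t,
      .of_forall fun n => sub_lt_self t (hr_pos n)⟩
  obtain ⟨ns, hns, hae⟩ := hincr.exists_seq_tendsto_ae
  filter_upwards [hae, hX.left_lim] with ω hω hll
  obtain ⟨l, hl⟩ := hll t ht
  have hlim : Tendsto (fun i => X t ω - X (t - r (ns i)) ω) atTop (𝓝 (X t ω - l)) :=
    tendsto_const_nhds.sub (hl.comp (hleft.comp hns.tendsto_atTop))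
  rwa [← sub_eq_zero.1 (tendsto_nhds_unique hlim hω)] at hl

theorem _root_.IsLevyProcess.ae_tendsto_nhdsLT_of_indepFun (hX : IsLevyProcess P X)
    {U : Ω → ℝ} (hU : Measurable U) (hUX : IndepFun U (fun ω t => X t ω) P) :
    ∀ᵐ ω ∂P, 0 < U ω → Tendsto (fun s => X s ω) (𝓝[<] U ω) (𝓝 (X (U ω) ω)) := by
  set B : Set (ℝ × (ℝ → ℝ)) :=
    {p | 0 < p.1} ∩ {p | Tendsto (dyadicIncrement p.2 p.1) atTop (𝓝 0)}ᶜ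
  have hB : MeasurableSet B :=
    (measurable_fst measurableSet_Ioi).inter measurableSet_tendsto_dyadicIncrement.compl
  have hnull := measure_preimage_eq_zero_of_indepFun hU
    (measurable_pi_lambda _ hX.measurable) hUX hB fun t => by
      rcases le_or_gt t 0 with ht | ht
      · simp [B, ht.not_gt]
      · refine measure_mono_null (fun ω hω => hω.2) (ae_iff.1 ?_)
        filter_upwards [hX.ae_tendsto_nhdsLT ht, hX.right_cont] with ω hl hr
        exact tendsto_dyadicIncrement (hr t ht.le) hl
  filter_upwards [measure_eq_zero_iff_ae_notMem.1 hnull, hX.right_cont, hX.left_lim]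
    with ω hω hr hl hU0
  obtain ⟨l, hl⟩ := hl _ hU0
  refine tendsto_nhdsLT_of_tendsto_dyadicIncrement (hr _ hU0.le) hl ?_
  by_contra h
  exact hω ⟨hU0, h⟩

end LevyProcess

/-- The pathwise `ℓ`: `invS S t ω` is `rightInv (S · ω) t` by definition. -/
def rightInv (f : ℝ → ℝ) (t : ℝ) : ℝ := sInf {s | 0 < s ∧ t < f s}

/-- Unlike `rightInv f t`, this is measurable in `f` for the product σ-algebra. -/
def rightInvRat (f : ℝ → ℝ) (t : ℝ) : ℝ :=
  sInf (((↑) : ℚ → ℝ) '' {q : ℚ | 0 < q ∧ t < f q})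

section rightInv

variable {f : ℝ → ℝ} {t t' v : ℝ}

lemma bddBelow_rightInv_set (f : ℝ → ℝ) (t : ℝ) : BddBelow {s | 0 < s ∧ t < f s} :=
  ⟨0, fun _ hs => hs.1.le⟩

lemma rightInv_nonneg (f : ℝ → ℝ) (t : ℝ) : 0 ≤ rightInv f t :=
  Real.sInf_nonneg fun _ hs => hs.1.le

lemma rightInv_eq_zero (h : ¬ ∃ s, 0 < s ∧ t < f s) : rightInv f t = 0 := by
  have hempty : {s | 0 < s ∧ t < f s} = ∅ :=
    Set.eq_empty_iff_forall_notMem.2 fun s hs => h ⟨s, hs⟩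
  rw [rightInv, hempty, Real.sInf_empty]

lemma rightInv_le (hv : 0 < v) (htv : t < f v) : rightInv f t ≤ v :=
  csInf_le (bddBelow_rightInv_set f t) ⟨hv, htv⟩

lemma apply_le_of_lt_rightInv (hv : 0 < v) (hvt : v < rightInv f t) : f v ≤ t :=
  not_lt.1 fun h => (rightInv_le hv h).not_gt hvt

lemma le_apply_rightInv (hf : ContinuousWithinAt f (Ici (rightInv f t)) (rightInv f t))
    (hne : ∃ s, 0 < s ∧ t < f s) : t ≤ f (rightInv f t) := by
  by_contra! hlt
  obtain ⟨b, hb, hsub⟩ := mem_nhdsGE_iff_exists_Ico_subset.1 (hf (Iio_mem_nhds hlt))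
  obtain ⟨s, hs, hsb⟩ := exists_lt_of_csInf_lt hne hb
  exact (hsub ⟨csInf_le (bddBelow_rightInv_set f t) hs, hsb⟩).not_gt hs.2

lemma rightInv_pos (h0 : f 0 ≤ t) (h : t < f (rightInv f t)) : 0 < rightInv f t := by
  refine (rightInv_nonneg f t).lt_of_ne fun h' => ?_
  rw [← h'] at h
  exact h0.not_gt h

lemma rightInv_eq_of_le_of_lt (htt' : t ≤ t') (ht' : t' < f (rightInv f t))
    (hpos : 0 < rightInv f t) : rightInv f t' = rightInv f t :=
  IsLeast.csInf_eq ⟨⟨hpos, ht'⟩, fun _ hs => rightInv_le hs.1 (htt'.trans_lt hs.2)⟩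

variable (hf : StrictMonoOn f (Ici 0))
include hf

lemma rightInv_apply (hv : 0 < v) : rightInv f (f v) = v := by
  have hset : {s | 0 < s ∧ f v < f s} = Ioi v := by
    ext s
    refine ⟨fun hs => show v < s from lt_of_not_ge fun hsv => ?_, fun hs => ⟨hv.trans hs, ?_⟩⟩
    · exact (hf.monotoneOn hs.1.le hv.le hsv).not_gt hs.2
    · exact hf hv.le (hv.trans hs).le hs
  rw [rightInv, hset, csInf_Ioi]

lemma apply_lt_of_lt_rightInv (hv : 0 < v) (hvt : v < rightInv f t) : f v < t := by
  have hw : v < (v + rightInv f t) / 2 := by linarith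
  calc f v < f ((v + rightInv f t) / 2) := hf hv.le (hv.le.trans hw.le) hw
    _ ≤ t := apply_le_of_lt_rightInv (hv.trans hw) (by linarith)

end rightInv

lemma rightInvRat_eq_rightInv {f : ℝ → ℝ} (hf : MonotoneOn f (Ici 0)) (t : ℝ) :
    rightInvRat f t = rightInv f t := by
  set A := {s | 0 < s ∧ t < f s}
  set AQ := ((↑) : ℚ → ℝ) '' {q : ℚ | 0 < q ∧ t < f q}
  have hsub : AQ ⊆ A := by
    rintro _ ⟨q, hq, rfl⟩
    exact ⟨Rat.cast_pos.2 hq.1, hq.2⟩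
  have hup : ∀ s ∈ A, ∀ q : ℚ, s < q → (q : ℝ) ∈ AQ := fun s hs q hq =>
    ⟨q, ⟨Rat.cast_pos.1 (hs.1.trans hq), hs.2.trans_le (hf hs.1.le (hs.1.trans hq).le hq.le)⟩, rfl⟩
  rcases A.eq_empty_or_nonempty with hA | ⟨s, hs⟩
  · have hAQ : AQ = ∅ := Set.subset_empty_iff.1 (hA ▸ hsub)
    change sInf AQ = sInf A
    rw [hAQ, hA]
  have hbdd : BddBelow AQ := (bddBelow_rightInv_set f t).mono hsub
  obtain ⟨q, hq⟩ := exists_rat_gt s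
  refine le_antisymm ?_ (csInf_le_csInf (bddBelow_rightInv_set f t) ⟨q, hup s hs q hq⟩ hsub)
  exact le_csInf ⟨s, hs⟩ fun s' hs' =>
    le_of_forall_lt_rat_imp_le fun q hq => csInf_le hbdd (hup s' hs' q hq)

lemma measurable_rightInvRat (t : ℝ) : Measurable fun f : ℝ → ℝ => rightInvRat f t := by
  refine measurable_of_Iio fun x => ?_
  have hpre : (fun f : ℝ → ℝ => rightInvRat f t) ⁻¹' Iio x =
      (⋃ q : ℚ, {f | 0 < q ∧ t < f q ∧ (q : ℝ) < x}) ∪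
        ((⋂ q : ℚ, {f | ¬ (0 < q ∧ t < f q)}) ∩ {_f | 0 < x}) := by
    ext f
    set AQ := ((↑) : ℚ → ℝ) '' {q : ℚ | 0 < q ∧ t < f q}
    change sInf AQ < x ↔ _
    simp only [mem_union, mem_iUnion, mem_iInter, mem_inter_iff, mem_ofPred_eq]
    rcases AQ.eq_empty_or_nonempty with hAQ | hAQ
    · have hq : ∀ q : ℚ, ¬ (0 < q ∧ t < f q) := fun q hq => hAQ.subset ⟨q, hq, rfl⟩
      rw [hAQ, Real.sInf_empty]
      exact ⟨fun hx => .inr ⟨hq, hx⟩,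
        fun h => h.elim (fun ⟨q, hq0, hqt, _⟩ => (hq q ⟨hq0, hqt⟩).elim) And.right⟩
    · have hbdd : BddBelow AQ := ⟨0, by rintro _ ⟨q, hq, rfl⟩; exact Rat.cast_nonneg.2 hq.1.le⟩
      obtain ⟨_, q₀, hq₀, rfl⟩ := hAQ
      rw [csInf_lt_iff hbdd ⟨_, q₀, hq₀, rfl⟩]
      constructor
      · rintro ⟨_, ⟨q, hq, rfl⟩, hqx⟩
        exact .inl ⟨q, hq.1, hq.2, hqx⟩
      · rintro (⟨q, hq0, hqt, hqx⟩ | ⟨hno, -⟩)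
        · exact ⟨q, ⟨q, ⟨hq0, hqt⟩, rfl⟩, hqx⟩
        · exact (hno q₀ hq₀).elim
  rw [hpre]
  have hlt : ∀ q : ℚ, MeasurableSet {f : ℝ → ℝ | t < f q} :=
    fun q => measurableSet_lt measurable_const (measurable_pi_apply _)
  exact .union (.iUnion fun q => (MeasurableSet.const _).inter ((hlt q).inter (.const _)))
    ((MeasurableSet.iInter fun q => ((MeasurableSet.const _).inter (hlt q)).compl).inter
      (.const _))

/-- The pathwise `passageTime`. -/
def firstPassage (p : ℝ → Prop) : ℝ≥0∞ := sInf (ENNReal.ofReal '' {t | 0 < t ∧ p t})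

lemma exists_of_firstPassage_lt_top {p : ℝ → Prop} (hp : firstPassage p < ⊤) :
    ∃ t, 0 < t ∧ p t := by
  by_contra! hne
  have hempty : {t | 0 < t ∧ p t} = ∅ :=
    Set.eq_empty_iff_forall_notMem.2 fun t ht => hne t ht.1 ht.2
  simp [firstPassage, hempty] at hp

lemma toReal_firstPassage {p : ℝ → Prop} (hp : ∃ t, 0 < t ∧ p t) :
    (firstPassage p).toReal = sInf {t | 0 < t ∧ p t} := by
  have hne : {t | 0 < t ∧ p t}.Nonempty := hp
  rw [firstPassage, ← Monotone.map_csInf_of_continuousAt ENNReal.continuous_ofReal.continuousAt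
    ENNReal.ofReal_mono hne ⟨0, fun t ht => ht.1.le⟩,
    ENNReal.toReal_ofReal (Real.sInf_nonneg fun t ht => ht.1.le)]

lemma firstPassage_le_firstPassage {p p' : ℝ → Prop}
    (h : ∀ t, 0 < t → p t → ∃ t', 0 < t' ∧ p' t' ∧ t' ≤ t) :
    firstPassage p' ≤ firstPassage p := by
  refine le_sInf ?_
  rintro _ ⟨t, ⟨ht, hpt⟩, rfl⟩
  obtain ⟨t', ht', hpt', ht't⟩ := h t ht hpt
  exact sInf_le_of_le ⟨t', ⟨ht', hpt'⟩, rfl⟩ (ENNReal.ofReal_le_ofReal ht't)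

/-- Sample paths of `X`, `S`, `H`; `x_leftCont` is where the independence of `X` and `S` enters. -/
structure GoodPaths (x s h : ℝ → ℝ) : Prop where
  x_zero : x 0 = 0
  s_zero : s 0 = 0
  h_zero : h 0 = 0
  s_strictMonoOn : StrictMonoOn s (Ici 0)
  s_rightCont : ∀ t, 0 ≤ t → ContinuousWithinAt s (Ici t) t
  h_monotoneOn : MonotoneOn h (Ici 0)
  x_leftCont : ∀ q : ℚ, 0 < rightInv s q →
    Tendsto x (𝓝[<] rightInv s q) (𝓝 (x (rightInv s q)))

namespace GoodPaths

variable {x s h : ℝ → ℝ} (G : GoodPaths x s h) {a t : ℝ}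
include G

lemma s_nonneg {v : ℝ} (hv : 0 ≤ v) : 0 ≤ s v :=
  G.s_zero ▸ G.s_strictMonoOn.monotoneOn self_mem_Ici hv hv

lemma s_pos {v : ℝ} (hv : 0 < v) : 0 < s v :=
  G.s_zero ▸ G.s_strictMonoOn self_mem_Ici hv.le hv

lemma h_nonneg {v : ℝ} (hv : 0 ≤ v) : 0 ≤ h v :=
  G.h_zero ▸ G.h_monotoneOn self_mem_Ici hv hv

lemma exists_lt_apply (hx : 0 < x (rightInv s t)) : ∃ σ, 0 < σ ∧ t < s σ := by
  by_contra hne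
  rw [rightInv_eq_zero hne, G.x_zero] at hx
  exact hx.false

lemma le_apply_rightInv (hx : 0 < x (rightInv s t)) : t ≤ s (rightInv s t) :=
  LevyRegeneration.le_apply_rightInv (G.s_rightCont _ (rightInv_nonneg s t)) (G.exists_lt_apply hx)

/-- A `t` with `t < s (ℓ t)` lies in an excursion interval of `s`, which contains a rational `q`,
and then `ℓ q = ℓ t`. -/
lemma tendsto_nhdsLT_rightInv (ht : 0 ≤ t) (hgap : t < s (rightInv s t)) :
    Tendsto x (𝓝[<] rightInv s t) (𝓝 (x (rightInv s t))) := by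
  have hpos := rightInv_pos (G.s_zero.trans_le ht) hgap
  obtain ⟨q, htq, hq⟩ := exists_rat_btwn hgap
  have hq_eq : rightInv s q = rightInv s t := rightInv_eq_of_le_of_lt htq.le hq hpos
  simpa only [hq_eq] using G.x_leftCont q (hq_eq ▸ hpos)

lemma exists_crossing_lt_rightInv (ht : 0 < t) (hgap : t < s (rightInv s t))
    (hcross : a + h t < x (rightInv s t)) : ∃ v ∈ Ioo 0 (rightInv s t), a + h (s v) < x v := by
  have hpos := rightInv_pos (G.s_zero.trans_le ht.le) hgap
  obtain ⟨v, hxv, hv⟩ := ((G.tendsto_nhdsLT_rightInv ht.le hgap).eventually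
    (lt_mem_nhds hcross)).and (Ioo_mem_nhdsLT hpos) |>.exists
  refine ⟨v, hv, lt_of_le_of_lt ?_ hxv⟩
  gcongr
  exact G.h_monotoneOn (G.s_pos hv.1).le ht.le
    (apply_lt_of_lt_rightInv G.s_strictMonoOn hv.1 hv.2).le

theorem firstPassage_eq (ha : 0 ≤ a) :
    firstPassage (fun t => a + h t < x (rightInv s t)) =
      firstPassage (fun t => a < x (rightInv s t) - h (s (rightInv s t))) := by
  refine le_antisymm (firstPassage_le_firstPassage ?_) (firstPassage_le_firstPassage ?_)
  · intro t ht hcross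
    have hst := G.le_apply_rightInv
      (by linarith [G.h_nonneg (G.s_nonneg (rightInv_nonneg s t))])
    exact ⟨t, ht, by linarith [G.h_monotoneOn ht.le (ht.le.trans hst) hst], le_rfl⟩
  · intro t ht hcross
    rcases (G.le_apply_rightInv (by linarith [G.h_nonneg ht.le])).eq_or_lt with heq | hgap
    · exact ⟨t, ht, by rw [← heq]; linarith, le_rfl⟩
    obtain ⟨v, hv, hxv⟩ := G.exists_crossing_lt_rightInv ht hgap hcross
    refine ⟨s v, G.s_pos hv.1, ?_, (apply_lt_of_lt_rightInv G.s_strictMonoOn hv.1 hv.2).le⟩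
    rw [rightInv_apply G.s_strictMonoOn hv.1]
    linarith

theorem apply_rightInv_toReal_firstPassage (ha : 0 ≤ a)
    (hT : firstPassage (fun t => a + h t < x (rightInv s t)) < ⊤) :
    s (rightInv s (firstPassage fun t => a + h t < x (rightInv s t)).toReal) =
      (firstPassage fun t => a + h t < x (rightInv s t)).toReal := by
  obtain ⟨t₁, ht₁, hcross₁⟩ := exists_of_firstPassage_lt_top hT
  rw [toReal_firstPassage ⟨t₁, ht₁, hcross₁⟩]
  set D := {t | 0 < t ∧ a + h t < x (rightInv s t)}
  have hle : ∀ t ∈ D, sInf D ≤ t := fun t ht => csInf_le ⟨0, fun t ht => ht.1.le⟩ ht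
  refine le_antisymm (not_lt.1 fun hgap => ?_) ?_
  · have hpos := rightInv_pos (G.s_zero.trans_le (Real.sInf_nonneg fun t ht => ht.1.le)) hgap
    obtain ⟨t₀, ht₀, ht₀lt⟩ := exists_lt_of_csInf_lt (s := D) ⟨t₁, ht₁, hcross₁⟩ hgap
    have hℓ := rightInv_eq_of_le_of_lt (hle t₀ ht₀) ht₀lt hpos
    obtain ⟨v, hv, hxv⟩ := G.exists_crossing_lt_rightInv ht₀.1 (hℓ ▸ ht₀lt) ht₀.2
    rw [hℓ] at hv
    have hsv : s v ∈ D := ⟨G.s_pos hv.1, by rwa [rightInv_apply G.s_strictMonoOn hv.1]⟩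
    exact (hle _ hsv).not_gt (apply_lt_of_lt_rightInv G.s_strictMonoOn hv.1 hv.2)
  · obtain ⟨σ, hσ, htσ⟩ := G.exists_lt_apply (by linarith [G.h_nonneg ht₁.le])
    exact LevyRegeneration.le_apply_rightInv (G.s_rightCont _ (rightInv_nonneg s _))
      ⟨σ, hσ, (hle t₁ ⟨ht₁, hcross₁⟩).trans_lt htσ⟩

end GoodPaths

theorem ae_goodPaths {Ω : Type*} [MeasurableSpace Ω] {P : Measure Ω} [IsFiniteMeasure P]
    {X S H : ℝ → Ω → ℝ} (hX : IsLevyProcess P X) (hS : IsStrictSubordinator P S)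
    (hH : IsSubordinator P H) (hSX : IndepFun (fun ω t => S t ω) (fun ω t => X t ω) P) :
    ∀ᵐ ω ∂P, GoodPaths (X · ω) (S · ω) (H · ω) := by
  have hleft : ∀ q : ℚ, ∀ᵐ ω ∂P, 0 < rightInv (S · ω) q →
      Tendsto (X · ω) (𝓝[<] rightInv (S · ω) q) (𝓝 (X (rightInv (S · ω) q) ω)) := fun q => by
    have hU := hX.ae_tendsto_nhdsLT_of_indepFun (U := fun ω => rightInvRat (S · ω) q)
      ((measurable_rightInvRat q).comp (measurable_pi_lambda _ hS.1.measurable))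
      (hSX.comp (measurable_rightInvRat q) measurable_id)
    filter_upwards [hU, hS.2] with ω hω hmono
    rwa [rightInvRat_eq_rightInv hmono.monotoneOn] at hω
  filter_upwards [hX.init, hS.1.init, hH.1.init, hS.2, hS.1.right_cont, hH.2,
    ae_all_iff.2 hleft] with ω hX0 hS0 hH0 hSmono hSrc hHmono hXleft
  exact ⟨hX0, hS0, hH0, hSmono, hSrc, hHmono, hXleft⟩

end LevyRegeneration

end

/-- the graph of `T_a^{(H)}` is contained in the regeneration set
`{t : S_{ℓ_t} = t}`, and `T_a^{(H)}` coincides a.s. with the first passage time of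
`t ↦ X_{ℓ_t} - H_{S_{ℓ_t}}` above `a`. -/
theorem statement_4 {Ω : Type*} [MeasurableSpace Ω] (P : MeasureTheory.Measure Ω)
    [MeasureTheory.IsProbabilityMeasure P] (X S H : ℝ → Ω → ℝ)
    (hX : IsLevyProcess P X) (hS : IsStrictSubordinator P S) (hH : IsSubordinator P H)
    (hindep : IndepProc3 P X S H) :
    ∀ a : ℝ, 0 ≤ a →
      (∀ᵐ ω ∂P, TH X S H a ω < ⊤ →
        S (invS S (TH X S H a ω).toReal ω) ω = (TH X S H a ω).toReal) ∧
      (∀ᵐ ω ∂P, TH X S H a ω =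
        passageTime (fun ω t => a < subX X S t ω - H (S (invS S t ω) ω) ω) ω) := by
  intro a ha
  have hSX : IndepFun (fun ω t => S t ω) (fun ω t => X t ω) P := by
    simpa [IndepProc3] using hindep.indepFun (i := 1) (j := 0) (by decide)
  have hG := LevyRegeneration.ae_goodPaths hX hS hH hSX
  exact ⟨by filter_upwards [hG] with ω G using G.apply_rightInv_toReal_firstPassage ha,
    by filter_upwards [hG] with ω G using G.firstPassage_eq ha⟩
end

section
/- For every a ≥ 0, almost surely inf{t > 0 : X_{ℓ_t} − H_{S_{ℓ_t}} > a} = S_{τ_a}, where τ_a = inf{t > 0 : X_t − H_{S_t} > a} ∈ [0,∞] and S_{τ_a} is understood as ∞ on the event {τ_a = ∞}. -/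
open MeasureTheory ProbabilityTheory Filter Set
open scoped ENNReal NNReal Topology

/-!
Let `T = {u > 0 : X_u - H_{S_u} > a}`, `τ = inf T`, and let `L` be the corresponding set
`{t > 0 : X_{ℓ_t} - H_{S_{ℓ_t}} > a}`. Pathwise, `u ↦ S_u` maps `T` into `L` (as `ℓ_{S_u} = u`) and
`t ↦ ℓ_t` maps `L` into `T` (as `a ≥ 0`), so both sets are empty together, and right-continuity of
`S` gives `inf L ≤ S_τ`. Conversely, if some `t ∈ L` had `t < S_τ`, then `ℓ_t = τ ∈ T` and `S` jumps
across `t` at `τ`; since `X_u ≤ a + H_{S_τ}` for `u < τ`, left-continuity of `X` at `τ` would give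
`X_τ ≤ a + H_{S_τ}`, contradicting `τ ∈ T`.

That left-continuity is the only probabilistic input: every jump time of `S` is the hitting time
of a rational level, a countable family of random times independent of `X`, and by stationarity of
increments a Lévy process is a.s. continuous at any fixed time.
-/

section PassageTime

variable {Ω : Type*} {Y : Ω → ℝ → Prop} {ω : Ω}

theorem passageTime_eq_ofReal_sInf (h : {t : ℝ | 0 < t ∧ Y ω t}.Nonempty) :
    passageTime Y ω = ENNReal.ofReal (sInf {t : ℝ | 0 < t ∧ Y ω t}) :=
  (ENNReal.ofReal_mono.map_csInf_of_continuousAt ENNReal.continuous_ofReal.continuousAt h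
    ⟨0, fun _ ht => ht.1.le⟩).symm

theorem passageTime_eq_top (h : {t : ℝ | 0 < t ∧ Y ω t} = ∅) : passageTime Y ω = ⊤ := by
  simp [passageTime, h]

end PassageTime

section InvS

variable {Ω : Type*} {S : ℝ → Ω → ℝ} {ω : Ω}

theorem invS_nonneg (t : ℝ) : 0 ≤ invS S t ω :=
  Real.sInf_nonneg fun _ hv => hv.1.le

theorem invS_le {t u : ℝ} (hu : 0 < u) (htu : t < S u ω) : invS S t ω ≤ u :=
  csInf_le ⟨0, fun _ hv => hv.1.le⟩ ⟨hu, htu⟩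

theorem le_of_lt_invS {t u : ℝ} (hu : 0 < u) (hlt : u < invS S t ω) : S u ω ≤ t :=
  not_lt.mp fun h => (invS_le hu h).not_gt hlt

theorem invS_apply_self (hS : StrictMonoOn (S · ω) (Ici 0)) {u : ℝ} (hu : 0 < u) :
    invS S (S u ω) ω = u := by
  have hset : {v : ℝ | 0 < v ∧ S u ω < S v ω} = Ioi u := by
    ext v
    refine ⟨fun ⟨hv, huv⟩ => (hS.lt_iff_lt hu.le hv.le).mp huv, fun huv => ?_⟩
    have hv : 0 < v := hu.trans huv
    exact ⟨hv, (hS.lt_iff_lt hu.le hv.le).mpr huv⟩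
  rw [invS, hset, csInf_Ioi]

end InvS

def LeftContinuousAtJumps {Ω : Type*} (X S : ℝ → Ω → ℝ) (ω : Ω) : Prop :=
  ∀ r c, 0 < r → (∀ u ∈ Ico 0 r, S u ω ≤ c) → c < S r ω → Tendsto (X · ω) (𝓝[<] r) (𝓝 (X r ω))

section Pathwise

variable {Ω : Type*} {X S H : ℝ → Ω → ℝ} {ω : Ω} {a : ℝ}

theorem apply_mem_passageSet_subX (hS0 : S 0 ω = 0) (hS : StrictMonoOn (S · ω) (Ici 0)) {u : ℝ}
    (hu : u ∈ {t : ℝ | 0 < t ∧ a < X t ω - H (S t ω) ω}) :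
    S u ω ∈ {t : ℝ | 0 < t ∧ a < subX X S t ω - H (S (invS S t ω) ω) ω} := by
  refine ⟨hS0 ▸ hS self_mem_Ici hu.1.le hu.1, ?_⟩
  rw [subX, invS_apply_self hS hu.1]
  exact hu.2

theorem invS_mem_passageSet (ha : 0 ≤ a) (hX0 : X 0 ω = 0) (hS0 : S 0 ω = 0) (hH0 : H 0 ω = 0)
    {t : ℝ} (ht : t ∈ {t : ℝ | 0 < t ∧ a < subX X S t ω - H (S (invS S t ω) ω) ω}) :
    invS S t ω ∈ {t : ℝ | 0 < t ∧ a < X t ω - H (S t ω) ω} := by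
  refine ⟨(invS_nonneg t).lt_of_ne fun h => ?_, ht.2⟩
  have := ht.2
  rw [subX, ← h, hX0, hS0, hH0] at this
  linarith

theorem apply_sInf_passageSet_le (ha : 0 ≤ a) (hX0 : X 0 ω = 0) (hS0 : S 0 ω = 0)
    (hH0 : H 0 ω = 0) (hS : MonotoneOn (S · ω) (Ici 0)) (hH : MonotoneOn (H · ω) (Ici 0))
    (hjump : LeftContinuousAtJumps X S ω)
    {t : ℝ} (ht : t ∈ {t : ℝ | 0 < t ∧ a < subX X S t ω - H (S (invS S t ω) ω) ω}) :
    S (sInf {t : ℝ | 0 < t ∧ a < X t ω - H (S t ω) ω}) ω ≤ t := by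
  set T := {t : ℝ | 0 < t ∧ a < X t ω - H (S t ω) ω}
  have hTbdd : BddBelow T := ⟨0, fun _ hv => hv.1.le⟩
  have hτ0 : 0 ≤ sInf T := Real.sInf_nonneg fun _ hv => hv.1.le
  by_contra! htS
  have hτ : 0 < sInf T := hτ0.lt_of_ne fun h => by rw [← h, hS0] at htS; linarith [ht.1]
  have hℓT := invS_mem_passageSet ha hX0 hS0 hH0 ht
  have hℓ : invS S t ω = sInf T := (invS_le hτ htS).antisymm (csInf_le hTbdd hℓT)
  have hleft := hjump (sInf T) t hτ (fun u hu => by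
    rcases hu.1.eq_or_lt with rfl | hu0
    · rw [hS0]; exact ht.1.le
    · exact le_of_lt_invS hu0 (hℓ ▸ hu.2)) htS
  have hbelow : ∀ᶠ w in 𝓝[<] sInf T, X w ω ≤ a + H (S (sInf T) ω) ω := by
    filter_upwards [Ioo_mem_nhdsLT hτ] with w hw
    have hwT : w ∉ T := notMem_of_lt_csInf hw.2 hTbdd
    have hSw : S w ω ≤ S (sInf T) ω := hS hw.1.le hτ0 hw.2.le
    have hSw0 : 0 ≤ S w ω := hS0 ▸ hS self_mem_Ici hw.1.le hw.1.le
    have hHw := hH hSw0 (hSw0.trans hSw) hSw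
    simp only [T, mem_ofPred_eq, not_and, not_lt] at hwT
    linarith [hwT hw.1]
  have hτT : a < X (sInf T) ω - H (S (sInf T) ω) ω := hℓ ▸ hℓT.2
  linarith [le_of_tendsto hleft hbelow]

theorem isGLB_passageSet_subX (ha : 0 ≤ a) (hX0 : X 0 ω = 0) (hS0 : S 0 ω = 0)
    (hH0 : H 0 ω = 0) (hS : StrictMonoOn (S · ω) (Ici 0))
    (hSrc : ∀ t, 0 ≤ t → ContinuousWithinAt (S · ω) (Ici t) t) (hH : MonotoneOn (H · ω) (Ici 0))
    (hjump : LeftContinuousAtJumps X S ω)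
    (hT : {t : ℝ | 0 < t ∧ a < X t ω - H (S t ω) ω}.Nonempty) :
    IsGLB {t : ℝ | 0 < t ∧ a < subX X S t ω - H (S (invS S t ω) ω) ω}
      (S (sInf {t : ℝ | 0 < t ∧ a < X t ω - H (S t ω) ω}) ω) := by
  set T := {t : ℝ | 0 < t ∧ a < X t ω - H (S t ω) ω}
  refine ⟨fun t ht => apply_sInf_passageSet_le ha hX0 hS0 hH0 hS.monotoneOn hH hjump ht, fun b hb => ?_⟩
  have hTbdd : BddBelow T := ⟨0, fun _ hv => hv.1.le⟩
  have hcont : ContinuousWithinAt (S · ω) T (sInf T) :=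
    (hSrc _ (Real.sInf_nonneg fun _ hv => hv.1.le)).mono fun _ hu => csInf_le hTbdd hu
  have hmem := hcont.mem_closure_image (csInf_mem_closure hT hTbdd)
  refine isClosed_Ici.closure_subset_iff.mpr ?_ hmem
  rintro _ ⟨u, hu, rfl⟩
  exact hb (apply_mem_passageSet_subX hS0 hS hu)

theorem passageTime_subX_eq (ha : 0 ≤ a) (hX0 : X 0 ω = 0) (hS0 : S 0 ω = 0)
    (hH0 : H 0 ω = 0) (hS : StrictMonoOn (S · ω) (Ici 0))
    (hSrc : ∀ t, 0 ≤ t → ContinuousWithinAt (S · ω) (Ici t) t) (hH : MonotoneOn (H · ω) (Ici 0))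
    (hjump : LeftContinuousAtJumps X S ω) :
    passageTime (fun ω t => a < subX X S t ω - H (S (invS S t ω) ω) ω) ω =
      if passageTime (fun ω t => a < X t ω - H (S t ω) ω) ω < ⊤ then
        ENNReal.ofReal (S (passageTime (fun ω t => a < X t ω - H (S t ω) ω) ω).toReal ω)
      else ⊤ := by
  by_cases hT : {t : ℝ | 0 < t ∧ a < X t ω - H (S t ω) ω}.Nonempty
  · have hL : {t : ℝ | 0 < t ∧ a < subX X S t ω - H (S (invS S t ω) ω) ω}.Nonempty :=
      let ⟨_, hu⟩ := hT; ⟨_, apply_mem_passageSet_subX hS0 hS hu⟩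
    rw [passageTime_eq_ofReal_sInf hL,
      passageTime_eq_ofReal_sInf (Y := fun ω t => a < X t ω - H (S t ω) ω) hT,
      if_pos ENNReal.ofReal_lt_top,
      ENNReal.toReal_ofReal (Real.sInf_nonneg fun _ hv => hv.1.le),
      (isGLB_passageSet_subX ha hX0 hS0 hH0 hS hSrc hH hjump hT).csInf_eq hL]
  · have hL : {t : ℝ | 0 < t ∧ a < subX X S t ω - H (S (invS S t ω) ω) ω} = ∅ :=
      eq_empty_of_forall_notMem fun t ht => hT ⟨_, invS_mem_passageSet ha hX0 hS0 hH0 ht⟩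
    rw [passageTime_eq_top hL,
      passageTime_eq_top (Y := fun ω t => a < X t ω - H (S t ω) ω)
        (not_nonempty_iff_eq_empty.mp hT),
      if_neg (lt_irrefl ⊤)]

end Pathwise

/-- Continuity at `r` of a càdlàg path, read off its values at rational times only, so that it is
a measurable condition on `(x, r)`. -/
def NoJumpAlongRat (x : ℚ → ℝ) (r : ℝ) : Prop :=
  ∀ k : ℕ, ∃ n : ℕ, ∀ q q' : ℚ, (q : ℝ) ∈ Ioo (r - 1 / (n + 1)) r →
    (q' : ℝ) ∈ Ioo r (r + 1 / (n + 1)) → |x q - x q'| ≤ 1 / (k + 1)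

theorem measurable_noJumpAlongRat :
    Measurable fun p : (ℚ → ℝ) × ℝ => NoJumpAlongRat p.1 p.2 := by
  unfold NoJumpAlongRat
  simp only [mem_Ioo]
  fun_prop

theorem ContinuousAt.noJumpAlongRat {x : ℝ → ℝ} {r : ℝ} (hx : ContinuousAt x r) :
    NoJumpAlongRat (fun q : ℚ => x q) r := by
  intro k
  obtain ⟨δ, hδ, hball⟩ := Metric.continuousAt_iff.mp hx (1 / (k + 1) / 2) (by positivity)
  obtain ⟨n, hn⟩ := exists_nat_one_div_lt hδ
  refine ⟨n, fun q q' hq hq' => ?_⟩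
  have h1 := hball (x := q) <| by
    rw [Real.dist_eq, abs_sub_lt_iff]; constructor <;> linarith [hq.1, hq.2]
  have h2 := hball (x := q') <| by
    rw [Real.dist_eq, abs_sub_lt_iff]; constructor <;> linarith [hq'.1, hq'.2]
  rw [Real.dist_eq] at h1 h2
  linarith [abs_sub_le (x q) (x r) (x q'), abs_sub_comm (x q') (x r)]

theorem exists_rat_mem_of_mem_nhdsLT {s : Set ℝ} {r : ℝ} (hs : s ∈ 𝓝[<] r) :
    ∃ q : ℚ, (q : ℝ) ∈ s :=
  let ⟨_, hl, hsub⟩ := mem_nhdsLT_iff_exists_Ioo_subset.mp hs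
  let ⟨q, hq⟩ := exists_rat_btwn hl
  ⟨q, hsub hq⟩

theorem exists_rat_mem_of_mem_nhdsGT {s : Set ℝ} {r : ℝ} (hs : s ∈ 𝓝[>] r) :
    ∃ q : ℚ, (q : ℝ) ∈ s :=
  let ⟨_, hu, hsub⟩ := mem_nhdsGT_iff_exists_Ioo_subset.mp hs
  let ⟨q, hq⟩ := exists_rat_btwn hu
  ⟨q, hsub hq⟩

theorem NoJumpAlongRat.eq_of_tendsto {x : ℝ → ℝ} {r l : ℝ}
    (hψ : NoJumpAlongRat (fun q : ℚ => x q) r) (hl : Tendsto x (𝓝[<] r) (𝓝 l))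
    (hrc : ContinuousWithinAt x (Ici r) r) : l = x r := by
  by_contra hne
  set d := |l - x r|
  have hd : 0 < d := abs_pos.mpr (sub_ne_zero.mpr hne)
  obtain ⟨k, hk⟩ := exists_nat_one_div_lt (div_pos hd three_pos)
  obtain ⟨n, hn⟩ := hψ k
  have hn0 : (0 : ℝ) < 1 / (n + 1) := by positivity
  obtain ⟨q, hq, hxq⟩ := exists_rat_mem_of_mem_nhdsLT <| inter_mem
    (Ioo_mem_nhdsLT (sub_lt_self r hn0)) (Metric.tendsto_nhds.mp hl _ (div_pos hd three_pos))
  obtain ⟨q', hq', hxq'⟩ := exists_rat_mem_of_mem_nhdsGT <| inter_mem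
    (Ioo_mem_nhdsGT (lt_add_of_pos_right r hn0))
    (Metric.tendsto_nhds.mp (hrc.mono Ioi_subset_Ici_self).tendsto _ (div_pos hd three_pos))
  have hqq' := hn q q' hq hq'
  rw [mem_ofPred_eq, Real.dist_eq] at hxq hxq'
  linarith [abs_sub_le l (x q) (x r), abs_sub_le (x q) (x q') (x r), abs_sub_comm l (x q)]

/-- The first time `s` exceeds the level `q`, computed along rational times so that it is a
measurable function of the path (`0` if there is no such time). -/
noncomputable def ratHittingTime (q : ℚ) (s : ℝ → ℝ) : ℝ :=
  (⨅ u : ℚ, if 0 < (u : ℝ) ∧ (q : ℝ) < s u then ENNReal.ofReal u else ⊤).toReal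

theorem measurable_ratHittingTime (q : ℚ) : Measurable (ratHittingTime q) := by
  refine ENNReal.measurable_toReal.comp (Measurable.iInf fun u => ?_)
  exact Measurable.ite (measurableSet_setOfPred.mpr (by fun_prop)) measurable_const measurable_const

theorem iInf_rat_ite_le_eq_ofReal (r : ℝ) :
    ⨅ u : ℚ, (if r ≤ (u : ℝ) then ENNReal.ofReal u else ⊤) = ENNReal.ofReal r := by
  refine le_antisymm (ENNReal.le_of_forall_pos_le_add fun ε hε _ => ?_)
    (le_iInf fun u => by split_ifs with hu; exacts [ENNReal.ofReal_le_ofReal hu, le_top])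
  obtain ⟨u, hru, hur⟩ := exists_rat_btwn (lt_add_of_pos_right r (NNReal.coe_pos.mpr hε))
  calc ⨅ u : ℚ, (if r ≤ (u : ℝ) then ENNReal.ofReal u else ⊤)
      ≤ ENNReal.ofReal u := (iInf_le _ u).trans_eq (if_pos hru.le)
    _ ≤ ENNReal.ofReal (r + ε) := ENNReal.ofReal_le_ofReal hur.le
    _ ≤ ENNReal.ofReal r + ε := by
      rw [← ENNReal.ofReal_coe_nnreal (p := ε)]; exact ENNReal.ofReal_add_le

theorem ratHittingTime_eq_of_jump {s : ℝ → ℝ} {r : ℝ} {q : ℚ} (hr : 0 < r)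
    (hs : MonotoneOn s (Ici 0)) (hbelow : ∀ u ∈ Ico 0 r, s u < q) (hq : (q : ℝ) < s r) :
    ratHittingTime q s = r := by
  have hiff : ∀ u : ℝ, (0 < u ∧ (q : ℝ) < s u) ↔ r ≤ u := fun u =>
    ⟨fun ⟨hu, hqu⟩ => not_lt.mp fun hur => (hbelow u ⟨hu.le, hur⟩).not_gt hqu,
      fun hru => ⟨hr.trans_le hru, hq.trans_le (hs hr.le (hr.le.trans hru) hru)⟩⟩
  simp only [ratHittingTime, hiff, iInf_rat_ite_le_eq_ofReal, ENNReal.toReal_ofReal hr.le]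

theorem ProbabilityTheory.IndepFun.ae_of_forall_ae {Ω β γ : Type*} [MeasurableSpace Ω]
    [MeasurableSpace β] [MeasurableSpace γ] {P : Measure Ω} [IsFiniteMeasure P] {f : Ω → β}
    {g : Ω → γ} (hfg : IndepFun f g P) (hf : Measurable f) (hg : Measurable g)
    {p : β → γ → Prop} (hp : Measurable fun z : β × γ => p z.1 z.2)
    (h : ∀ b, ∀ᵐ ω ∂P, p b (g ω)) : ∀ᵐ ω ∂P, p (f ω) (g ω) := by
  have hprod := (indepFun_iff_map_prod_eq_prod_map_map hf.aemeasurable hg.aemeasurable).mp hfg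
  have hmap : ∀ᵐ z ∂P.map fun ω => (f ω, g ω), p z.1 z.2 := by
    rw [hprod, Measure.ae_prod_iff_ae_ae hp.setOf]
    exact Eventually.of_forall fun b =>
      (ae_map_iff hg.aemeasurable (hp.comp measurable_prodMk_left).setOf).mpr (h b)
  exact ae_of_ae_map (hf.prodMk hg).aemeasurable hmap

namespace IsLevyProcess

variable {Ω : Type*} [MeasurableSpace Ω] {P : Measure Ω} {X : ℝ → Ω → ℝ}

theorem tendstoInMeasure_of_tendsto_zero [IsFiniteMeasure P] (hX : IsLevyProcess P X)
    {u : ℕ → ℝ} (hu0 : ∀ n, 0 ≤ u n) (hu : Tendsto u atTop (𝓝 0)) :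
    TendstoInMeasure P (fun n => X (u n)) atTop 0 := by
  refine tendstoInMeasure_of_tendsto_ae (fun n => (hX.measurable _).aestronglyMeasurable) ?_
  filter_upwards [hX.right_cont, hX.init] with ω hrc h0
  rw [Pi.zero_apply, ← h0]
  exact (hrc 0 le_rfl).tendsto.comp (tendsto_nhdsWithin_iff.mpr ⟨hu, .of_forall hu0⟩)

theorem tendstoInMeasure_sub_of_tendsto [IsFiniteMeasure P] (hX : IsLevyProcess P X)
    {r : ℝ} {s : ℕ → ℝ} (hs : ∀ n, s n ∈ Icc 0 r) (hlim : Tendsto s atTop (𝓝 r)) :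
    TendstoInMeasure P (fun n ω => X r ω - X (s n) ω) atTop 0 := by
  have hinc := hX.tendstoInMeasure_of_tendsto_zero (u := fun n => r - s n)
    (fun n => sub_nonneg.mpr (hs n).2) (by simpa using (tendsto_const_nhds (x := r)).sub hlim)
  rw [tendstoInMeasure_iff_dist] at hinc ⊢
  intro ε hε
  refine (hinc ε hε).congr fun n => ?_
  have hB : MeasurableSet {y : ℝ | ε ≤ dist y 0} :=
    measurableSet_le measurable_const (measurable_id.dist measurable_const)
  have hlaw := hX.stat_increments (r - s n) (s n) (sub_nonneg.mpr (hs n).2) (hs n).1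
  rw [add_sub_cancel] at hlaw
  calc P {ω | ε ≤ dist (X (r - s n) ω) 0}
      = P.map (X (r - s n)) {y | ε ≤ dist y 0} := (Measure.map_apply (hX.measurable _) hB).symm
    _ = P.map (fun ω => X r ω - X (s n) ω) {y | ε ≤ dist y 0} := by rw [hlaw]
    _ = P {ω | ε ≤ dist (X r ω - X (s n) ω) 0} :=
      Measure.map_apply ((hX.measurable r).sub (hX.measurable (s n))) hB

theorem ae_tendsto_nhdsLT_s5 [IsFiniteMeasure P] (hX : IsLevyProcess P X) {r : ℝ} (hr : 0 < r) :
    ∀ᵐ ω ∂P, Tendsto (X · ω) (𝓝[<] r) (𝓝 (X r ω)) := by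
  obtain ⟨s, -, hs, hlim⟩ := exists_seq_strictMono_tendsto' hr
  obtain ⟨ns, hns, hae⟩ := (hX.tendstoInMeasure_sub_of_tendsto
    (fun n => Ioo_subset_Icc_self (hs n)) hlim).exists_seq_tendsto_ae
  filter_upwards [hae, hX.left_lim] with ω hω hll
  obtain ⟨l, hl⟩ := hll r hr
  have hsub : Tendsto (fun i => X r ω - X (s (ns i)) ω) atTop (𝓝 (X r ω - l)) :=
    tendsto_const_nhds.sub (hl.comp (tendsto_nhdsWithin_iff.mpr
      ⟨hlim.comp hns.tendsto_atTop, .of_forall fun i => (hs (ns i)).2⟩))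
  rwa [sub_eq_zero.mp (tendsto_nhds_unique hsub hω)]

theorem ae_noJumpAlongRat [IsFiniteMeasure P] (hX : IsLevyProcess P X) {r : ℝ} (hr : 0 < r) :
    ∀ᵐ ω ∂P, NoJumpAlongRat (fun q : ℚ => X q ω) r := by
  filter_upwards [hX.ae_tendsto_nhdsLT_s5 hr, hX.right_cont] with ω hl hrc
  exact (continuousAt_iff_continuous_left_right.mpr
    ⟨continuousWithinAt_Iio_iff_Iic.mp hl, hrc r hr.le⟩).noJumpAlongRat

theorem ae_noJumpAlongRat_ratHittingTime [IsFiniteMeasure P] (hX : IsLevyProcess P X)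
    {S : ℝ → Ω → ℝ} (hSm : ∀ t, Measurable (S t))
    (hXS : IndepFun (fun ω t => S t ω) (fun ω t => X t ω) P) (q : ℚ) :
    ∀ᵐ ω ∂P, 0 < ratHittingTime q (S · ω) →
      NoJumpAlongRat (fun u : ℚ => X u ω) (ratHittingTime q (S · ω)) := by
  have hrestrict : Measurable fun (x : ℝ → ℝ) (u : ℚ) => x u := by fun_prop
  have hpos : Measurable fun z : ℝ × (ℚ → ℝ) => 0 < z.1 := by fun_prop
  exact (hXS.comp (measurable_ratHittingTime q) hrestrict).ae_of_forall_ae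
    (p := fun r x => 0 < r → NoJumpAlongRat x r)
    ((measurable_ratHittingTime q).comp (measurable_pi_lambda _ hSm))
    (hrestrict.comp (measurable_pi_lambda _ hX.measurable))
    (hpos.imp (measurable_noJumpAlongRat.comp measurable_swap))
    fun _ => eventually_imp_distrib_left.mpr hX.ae_noJumpAlongRat

theorem ae_leftContinuousAtJumps [IsFiniteMeasure P] (hX : IsLevyProcess P X)
    {S : ℝ → Ω → ℝ} (hSm : ∀ t, Measurable (S t)) (hSmono : ∀ᵐ ω ∂P, MonotoneOn (S · ω) (Ici 0))
    (hXS : IndepFun (fun ω t => S t ω) (fun ω t => X t ω) P) :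
    ∀ᵐ ω ∂P, LeftContinuousAtJumps X S ω := by
  filter_upwards [ae_all_iff.mpr (hX.ae_noJumpAlongRat_ratHittingTime hSm hXS), hSmono,
      hX.left_lim, hX.right_cont]
    with ω hω hmono hll hrc r c hr hbelow hc
  obtain ⟨q, hcq, hqr⟩ := exists_rat_btwn hc
  have hρ : ratHittingTime q (S · ω) = r :=
    ratHittingTime_eq_of_jump hr hmono (fun u hu => (hbelow u hu).trans_lt hcq) hqr
  obtain ⟨l, hl⟩ := hll r hr
  have hψ := hω q (hρ ▸ hr)
  rw [hρ] at hψ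
  rwa [hψ.eq_of_tendsto hl (hrc r hr.le)] at hl

end IsLevyProcess

/-- the first passage time of `t ↦ X_{ℓ_t} - H_{S_{ℓ_t}}` above `a` equals a.s.
`S_{τ_a}` where `τ_a` is the first passage time of the Lévy process `t ↦ X_t - H_{S_t}`. -/
theorem statement_5 {Ω : Type*} [MeasurableSpace Ω] (P : MeasureTheory.Measure Ω)
    [MeasureTheory.IsProbabilityMeasure P] (X S H : ℝ → Ω → ℝ)
    (hX : IsLevyProcess P X) (hS : IsStrictSubordinator P S) (hH : IsSubordinator P H)
    (hindep : IndepProc3 P X S H) :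
    ∀ a : ℝ, 0 ≤ a → ∀ᵐ ω ∂P,
      passageTime (fun ω t => a < subX X S t ω - H (S (invS S t ω) ω) ω) ω =
        (if passageTime (fun ω t => a < X t ω - H (S t ω) ω) ω < ⊤ then
          ENNReal.ofReal
            (S (passageTime (fun ω t => a < X t ω - H (S t ω) ω) ω).toReal ω)
        else ⊤) := by
  intro a ha
  have hSX : IndepFun (fun ω t => S t ω) (fun ω t => X t ω) P := by
    simpa using hindep.indepFun (i := 1) (j := 0) (by decide)
  have hjump := hX.ae_leftContinuousAtJumps hS.1.measurable
    (hS.2.mono fun _ h => h.monotoneOn) hSX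
  filter_upwards [hX.init, hS.1.init, hH.1.init, hS.2, hS.1.right_cont, hH.2, hjump]
    with ω hX0 hS0 hH0 hSmono hSrc hHmono hjumpω
  exact passageTime_subX_eq ha hX0 hS0 hH0 hSmono hSrc hHmono hjumpω
end
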